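/- arXiv:1606.02165 — 8 statements merged into one kernel-verified Lean document; each statement's English description precedes it below -/
import Mathlib

section
/- Let 0<ρ₁₂<1 and 0<Λ₁₁<∞, and let (σ_k) and (δ_k) be sequences of nonnegative reals satisfying σ_{k+1}² ≤ ρ₁₂ σ_k² + Λ₁₁ δ_k² for all k, and the quasiorthogonality ∑_{k=ℓ}^{ℓ+m} δ_k² ≤ Λ₄ σ_ℓ² for all ℓ, m. Then with Λ := (1+Λ₁₁Λ₄)/(1-ρ₁₂), for all ℓ, m ∈ ℕ it holds ∑_{k=ℓ}^{ℓ+m} σ_k² ≤ Λ σ_ℓ². -/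
/-!
Summing the estimator reduction over the window `ℓ, …, ℓ + m` and bounding the `δ`-part by
quasiorthogonality gives `S - σ_ℓ² + σ_{ℓ+m+1}² ≤ ρ S + Λ₁₁ Λ₄ σ_ℓ²` for the windowed sum `S`;
dropping `σ_{ℓ+m+1}² ≥ 0` and solving for `S` yields the bound.
-/

open Finset

theorem Finset.sum_Icc_add_one_shift {M : Type*} [AddCommMonoid M] (f : ℕ → M) (ℓ m : ℕ) :
    f ℓ + ∑ k ∈ Icc ℓ (ℓ + m), f (k + 1) = ∑ k ∈ Icc ℓ (ℓ + m), f k + f (ℓ + m + 1) := by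
  induction m with
  | zero => simp
  | succ m ih =>
    rw [← add_assoc, sum_Icc_succ_top (by omega), sum_Icc_succ_top (by omega), ← add_assoc, ih]

theorem sum_Icc_le_of_reduction_of_quasiorthogonality {ρ Λ Λ₄ : ℝ} {a b : ℕ → ℝ}
    (ha : ∀ k, 0 ≤ a k) (hρ : ρ < 1) (hΛ : 0 ≤ Λ) (hred : ∀ k, a (k + 1) ≤ ρ * a k + Λ * b k)
    {ℓ m : ℕ} (hqo : ∑ k ∈ Icc ℓ (ℓ + m), b k ≤ Λ₄ * a ℓ) :
    ∑ k ∈ Icc ℓ (ℓ + m), a k ≤ (1 + Λ * Λ₄) / (1 - ρ) * a ℓ := by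
  set S := ∑ k ∈ Icc ℓ (ℓ + m), a k
  have hshift : ∑ k ∈ Icc ℓ (ℓ + m), a (k + 1) ≤ ρ * S + Λ * (Λ₄ * a ℓ) :=
    calc ∑ k ∈ Icc ℓ (ℓ + m), a (k + 1)
        ≤ ∑ k ∈ Icc ℓ (ℓ + m), (ρ * a k + Λ * b k) := sum_le_sum fun k _ => hred k
      _ = ρ * S + Λ * ∑ k ∈ Icc ℓ (ℓ + m), b k := by rw [sum_add_distrib, mul_sum, mul_sum]
      _ ≤ ρ * S + Λ * (Λ₄ * a ℓ) := by gcongr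
  have htele := sum_Icc_add_one_shift a ℓ m
  rw [div_mul_eq_mul_div, le_div_iff₀ (by linarith)]
  linarith [ha (ℓ + m + 1)]

theorem stmt_0_general (ρ₁₂ Λ₁₁ Λ₄ : ℝ) (σ δ : ℕ → ℝ)
    (hρ' : ρ₁₂ < 1) (hΛ : 0 < Λ₁₁)
    (hred : ∀ k, σ (k + 1) ^ 2 ≤ ρ₁₂ * σ k ^ 2 + Λ₁₁ * δ k ^ 2)
    (hqo : ∀ ℓ m : ℕ, ∑ k ∈ Finset.Icc ℓ (ℓ + m), δ k ^ 2 ≤ Λ₄ * σ ℓ ^ 2) :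
    ∀ ℓ m : ℕ, ∑ k ∈ Finset.Icc ℓ (ℓ + m), σ k ^ 2 ≤
      (1 + Λ₁₁ * Λ₄) / (1 - ρ₁₂) * σ ℓ ^ 2 := fun ℓ m =>
  sum_Icc_le_of_reduction_of_quasiorthogonality (fun k => sq_nonneg (σ k)) hρ' hΛ.le hred (hqo ℓ m)

theorem stmt_0 (ρ₁₂ Λ₁₁ Λ₄ : ℝ) (σ δ : ℕ → ℝ)
    (hρ : 0 < ρ₁₂) (hρ' : ρ₁₂ < 1) (hΛ : 0 < Λ₁₁) (hΛ₄ : 0 < Λ₄)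
    (hσ : ∀ k, 0 ≤ σ k) (hδ : ∀ k, 0 ≤ δ k)
    (hred : ∀ k, σ (k + 1) ^ 2 ≤ ρ₁₂ * σ k ^ 2 + Λ₁₁ * δ k ^ 2)
    (hqo : ∀ ℓ m : ℕ, ∑ k ∈ Finset.Icc ℓ (ℓ + m), δ k ^ 2 ≤ Λ₄ * σ ℓ ^ 2) :
    ∀ ℓ m : ℕ, ∑ k ∈ Finset.Icc ℓ (ℓ + m), σ k ^ 2 ≤
      (1 + Λ₁₁ * Λ₄) / (1 - ρ₁₂) * σ ℓ ^ 2 :=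
  stmt_0_general ρ₁₂ Λ₁₁ Λ₄ σ δ hρ' hΛ hred hqo
end

section
/- Let (σ_k) be a sequence of nonnegative reals such that for some constant Λ ≥ 1 the tail bound ∑_{k=ℓ}^{ℓ+m} σ_k² ≤ Λ σ_ℓ² holds for all ℓ, m ∈ ℕ, and suppose the series ∑ σ_k² converges. Then with q := Λ/(1+Λ) < 1, for all ℓ, m ∈ ℕ one has σ_{ℓ+m}² ≤ (q^m/(1-q)) σ_ℓ², i.e. R-linear convergence. -/
/-!
Write `T ℓ = ∑_{k ≥ ℓ} σ_k²` for the tails of the series. The hypothesis bounds `T ℓ ≤ Λ σ_ℓ²`,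
and since `T ℓ = σ_ℓ² + T (ℓ + 1)` this gives `(1 + Λ) T (ℓ + 1) ≤ Λ T ℓ`: the tails decay
geometrically with ratio `q = Λ / (1 + Λ)`. Hence
`σ_{ℓ+m}² ≤ T (ℓ + m) ≤ q^m T ℓ ≤ q^m Λ σ_ℓ² ≤ q^m (1 + Λ) σ_ℓ² = q^m / (1 - q) σ_ℓ²`.
-/

open Finset

namespace TailBound

variable {a : ℕ → ℝ} {Λ : ℝ}

noncomputable def tail (a : ℕ → ℝ) (ℓ : ℕ) : ℝ := ∑' k, a (k + ℓ)

theorem tail_eq_add_tail_succ (ha : Summable a) (ℓ : ℕ) : tail a ℓ = a ℓ + tail a (ℓ + 1) := by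
  rw [tail, ((summable_nat_add_iff ℓ).2 ha).tsum_eq_zero_add, tail, zero_add]
  simp only [add_right_comm _ 1 ℓ, add_assoc]

theorem tail_nonneg (h0 : ∀ k, 0 ≤ a k) (ℓ : ℕ) : 0 ≤ tail a ℓ :=
  tsum_nonneg fun _ => h0 _

theorem le_tail (h0 : ∀ k, 0 ≤ a k) (ha : Summable a) (ℓ : ℕ) : a ℓ ≤ tail a ℓ := by
  linarith [tail_eq_add_tail_succ ha ℓ, tail_nonneg h0 (ℓ + 1)]

theorem sum_Icc_eq_sum_range (ℓ n : ℕ) :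
    ∑ k ∈ Icc ℓ (ℓ + n), a k = ∑ k ∈ range (n + 1), a (k + ℓ) := by
  rw [← Ico_add_one_right_eq_Icc, sum_Ico_eq_sum_range, add_assoc, Nat.add_sub_cancel_left]
  simp only [add_comm ℓ]

theorem tail_le_of_sum_Icc_le (h0 : ∀ k, 0 ≤ a k) (ha : Summable a) {ℓ : ℕ} {C : ℝ}
    (hC : ∀ m, ∑ k ∈ Icc ℓ (ℓ + m), a k ≤ C) : tail a ℓ ≤ C := by
  refine ((summable_nat_add_iff ℓ).2 ha).tsum_le_of_sum_range_le fun n => ?_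
  calc ∑ k ∈ range n, a (k + ℓ)
      ≤ ∑ k ∈ range (n + 1), a (k + ℓ) := sum_le_sum_of_subset_of_nonneg
        (range_subset_range.2 n.le_succ) fun k _ _ => h0 _
    _ = ∑ k ∈ Icc ℓ (ℓ + n), a k := (sum_Icc_eq_sum_range ℓ n).symm
    _ ≤ C := hC n

variable (h0 : ∀ k, 0 ≤ a k) (ha : Summable a) (hΛ : 0 ≤ Λ)
  (htail : ∀ ℓ m : ℕ, ∑ k ∈ Icc ℓ (ℓ + m), a k ≤ Λ * a ℓ)
include h0 ha htail

theorem tail_le (ℓ : ℕ) : tail a ℓ ≤ Λ * a ℓ :=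
  tail_le_of_sum_Icc_le h0 ha (htail ℓ)

include hΛ

theorem tail_succ_le (ℓ : ℕ) : tail a (ℓ + 1) ≤ Λ / (1 + Λ) * tail a ℓ := by
  have hrec := tail_eq_add_tail_succ ha ℓ
  have hbound := tail_le h0 ha htail ℓ
  rw [div_mul_eq_mul_div, le_div_iff₀ (by linarith)]
  nlinarith [h0 ℓ]

theorem apply_add_le_pow_mul (ℓ m : ℕ) : a (ℓ + m) ≤ (Λ / (1 + Λ)) ^ m * (Λ * a ℓ) := by
  have hq : 0 ≤ Λ / (1 + Λ) := by positivity
  calc a (ℓ + m) ≤ tail a (ℓ + m) := le_tail h0 ha _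
    _ ≤ (Λ / (1 + Λ)) ^ m * tail a (ℓ + 0) :=
        le_geom (u := fun k => tail a (ℓ + k)) hq m fun k _ => tail_succ_le h0 ha hΛ htail _
    _ ≤ (Λ / (1 + Λ)) ^ m * (Λ * a ℓ) :=
        mul_le_mul_of_nonneg_left (tail_le h0 ha htail ℓ) (pow_nonneg hq m)

end TailBound

theorem stmt_1_general (Λ : ℝ) (σ : ℕ → ℝ) (hΛ : 1 ≤ Λ)
    (hsum : Summable fun k => σ k ^ 2)
    (htail : ∀ ℓ m : ℕ, ∑ k ∈ Finset.Icc ℓ (ℓ + m), σ k ^ 2 ≤ Λ * σ ℓ ^ 2) :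
    ∀ ℓ m : ℕ, σ (ℓ + m) ^ 2 ≤ (Λ / (1 + Λ)) ^ m / (1 - Λ / (1 + Λ)) * σ ℓ ^ 2 := by
  intro ℓ m
  have hgeom : (Λ / (1 + Λ)) ^ m / (1 - Λ / (1 + Λ)) = (Λ / (1 + Λ)) ^ m * (1 + Λ) := by
    field_simp
    ring
  calc σ (ℓ + m) ^ 2 ≤ (Λ / (1 + Λ)) ^ m * (Λ * σ ℓ ^ 2) :=
        TailBound.apply_add_le_pow_mul (fun k => sq_nonneg (σ k)) hsum (by linarith) htail ℓ m
    _ ≤ (Λ / (1 + Λ)) ^ m / (1 - Λ / (1 + Λ)) * σ ℓ ^ 2 := by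
        rw [hgeom, mul_assoc]
        gcongr
        linarith

theorem stmt_1 (Λ : ℝ) (σ : ℕ → ℝ) (hΛ : 1 ≤ Λ)
    (hσ : ∀ k, 0 ≤ σ k)
    (hsum : Summable fun k => σ k ^ 2)
    (htail : ∀ ℓ m : ℕ, ∑ k ∈ Finset.Icc ℓ (ℓ + m), σ k ^ 2 ≤ Λ * σ ℓ ^ 2) :
    ∀ ℓ m : ℕ, σ (ℓ + m) ^ 2 ≤ (Λ / (1 + Λ)) ^ m / (1 - Λ / (1 + Λ)) * σ ℓ ^ 2 :=
  stmt_1_general Λ σ hΛ hsum htail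
end

section
/- Let (σ_k), (δ_k) be nonnegative sequences with σ_{k+1}² ≤ ρ₁₂ σ_k² + Λ₁₁ δ_k² for all k (constants 0<ρ₁₂<1, Λ₁₁>0), and suppose the ε-quasiorthogonality ∑_{k=ℓ}^{ℓ+m} δ_k² ≤ Λ₄^ε σ_ℓ² + ε ∑_{k=ℓ}^{ℓ+m} σ_k² holds for all ℓ, m with some ε satisfying 0 ≤ ε < (1-ρ₁₂)/Λ₁₁. Then the exact quasiorthogonality holds: ∑_{k=ℓ}^{ℓ+m} δ_k² ≤ Λ₄ σ_ℓ² for all ℓ, m, with Λ₄ := Λ₄^ε + ε(1+Λ₁₁Λ₄^ε)/(1-ρ₁₂-εΛ₁₁). -/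
/-!
Summing the estimator reduction over `k = ℓ, …, ℓ + m` and shifting the index gives
`(1 - ρ₁₂) ∑ σ_k² ≤ σ_ℓ² + Λ₁₁ ∑ δ_k²`. Feeding in the weak quasiorthogonality bounds the sum of the
`δ_k²` by `Λ₄^ε σ_ℓ² + ε ∑ σ_k²`, and since `ε Λ₁₁ < 1 - ρ₁₂` the `σ`-sum can be absorbed on the left:
`∑ σ_k² ≤ (1 + Λ₁₁ Λ₄^ε) / (1 - ρ₁₂ - ε Λ₁₁) · σ_ℓ²`. Substituting this back into the weak
quasiorthogonality gives the exact one.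
-/

open Finset

theorem sum_Icc_add_eq_add_sum_Icc_succ {M : Type*} [AddCommMonoid M] (f : ℕ → M) (ℓ m : ℕ) :
    ∑ k ∈ Icc ℓ (ℓ + m), f k + f (ℓ + m + 1) = f ℓ + ∑ k ∈ Icc ℓ (ℓ + m), f (k + 1) := by
  induction m with
  | zero => simp
  | succ m ih =>
    rw [← add_assoc, sum_Icc_succ_top (by omega), sum_Icc_succ_top (by omega), ih, add_assoc]

theorem sum_Icc_le_add_sum_Icc_succ {M : Type*} [AddCommMonoid M] [PartialOrder M]
    [IsOrderedAddMonoid M] (f : ℕ → M) (ℓ m : ℕ) (h : 0 ≤ f (ℓ + m + 1)) :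
    ∑ k ∈ Icc ℓ (ℓ + m), f k ≤ f ℓ + ∑ k ∈ Icc ℓ (ℓ + m), f (k + 1) :=
  sum_Icc_add_eq_add_sum_Icc_succ f ℓ m ▸ le_add_of_nonneg_right h

theorem one_sub_mul_sum_Icc_le_of_reduction {ρ Λ : ℝ} {s d : ℕ → ℝ} (hs : ∀ k, 0 ≤ s k)
    (hred : ∀ k, s (k + 1) ≤ ρ * s k + Λ * d k) (ℓ m : ℕ) :
    (1 - ρ) * ∑ k ∈ Icc ℓ (ℓ + m), s k ≤ s ℓ + Λ * ∑ k ∈ Icc ℓ (ℓ + m), d k := by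
  have hshift := sum_Icc_le_add_sum_Icc_succ s ℓ m (hs _)
  have hsum : ∑ k ∈ Icc ℓ (ℓ + m), s (k + 1) ≤
      ρ * ∑ k ∈ Icc ℓ (ℓ + m), s k + Λ * ∑ k ∈ Icc ℓ (ℓ + m), d k := by
    rw [mul_sum, mul_sum, ← sum_add_distrib]
    exact sum_le_sum fun k _ ↦ hred k
  linarith

theorem sum_Icc_le_of_reduction_of_weak_quasiorthogonality {ρ Λ C ε : ℝ} {s d : ℕ → ℝ}
    (hΛ : 0 ≤ Λ) (hε : 0 ≤ ε) (hgap : 0 < 1 - ρ - ε * Λ) (hs : ∀ k, 0 ≤ s k)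
    (hred : ∀ k, s (k + 1) ≤ ρ * s k + Λ * d k) (ℓ m : ℕ)
    (hqo : ∑ k ∈ Icc ℓ (ℓ + m), d k ≤ C * s ℓ + ε * ∑ k ∈ Icc ℓ (ℓ + m), s k) :
    ∑ k ∈ Icc ℓ (ℓ + m), d k ≤ (C + ε * (1 + Λ * C) / (1 - ρ - ε * Λ)) * s ℓ := by
  set S := ∑ k ∈ Icc ℓ (ℓ + m), s k
  have hreduced := one_sub_mul_sum_Icc_le_of_reduction hs hred ℓ m
  have hS : S ≤ (1 + Λ * C) / (1 - ρ - ε * Λ) * s ℓ := by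
    rw [div_mul_eq_mul_div, le_div_iff₀ hgap]
    linarith [mul_le_mul_of_nonneg_left hqo hΛ]
  calc ∑ k ∈ Icc ℓ (ℓ + m), d k ≤ C * s ℓ + ε * S := hqo
    _ ≤ C * s ℓ + ε * ((1 + Λ * C) / (1 - ρ - ε * Λ) * s ℓ) := by gcongr
    _ = (C + ε * (1 + Λ * C) / (1 - ρ - ε * Λ)) * s ℓ := by ring

theorem stmt_3_general (ρ₁₂ Λ₁₁ Λ₄ε ε : ℝ) (σ δ : ℕ → ℝ)
    (hΛ : 0 < Λ₁₁)
    (hε : 0 ≤ ε) (hε' : ε < (1 - ρ₁₂) / Λ₁₁)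
    (hred : ∀ k, σ (k + 1) ^ 2 ≤ ρ₁₂ * σ k ^ 2 + Λ₁₁ * δ k ^ 2)
    (hqoε : ∀ ℓ m : ℕ, ∑ k ∈ Finset.Icc ℓ (ℓ + m), δ k ^ 2 ≤
      Λ₄ε * σ ℓ ^ 2 + ε * ∑ k ∈ Finset.Icc ℓ (ℓ + m), σ k ^ 2) :
    ∀ ℓ m : ℕ, ∑ k ∈ Finset.Icc ℓ (ℓ + m), δ k ^ 2 ≤
      (Λ₄ε + ε * (1 + Λ₁₁ * Λ₄ε) / (1 - ρ₁₂ - ε * Λ₁₁)) * σ ℓ ^ 2 := by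
  intro ℓ m
  have hgap : 0 < 1 - ρ₁₂ - ε * Λ₁₁ := by
    linarith [(lt_div_iff₀ hΛ).mp hε']
  exact sum_Icc_le_of_reduction_of_weak_quasiorthogonality hΛ.le hε hgap
    (fun k ↦ sq_nonneg (σ k)) hred ℓ m (hqoε ℓ m)

theorem stmt_3 (ρ₁₂ Λ₁₁ Λ₄ε ε : ℝ) (σ δ : ℕ → ℝ)
    (hρ : 0 < ρ₁₂) (hρ' : ρ₁₂ < 1) (hΛ : 0 < Λ₁₁) (hΛ₄ε : 0 < Λ₄ε)
    (hε : 0 ≤ ε) (hε' : ε < (1 - ρ₁₂) / Λ₁₁)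
    (hσ : ∀ k, 0 ≤ σ k) (hδ : ∀ k, 0 ≤ δ k)
    (hred : ∀ k, σ (k + 1) ^ 2 ≤ ρ₁₂ * σ k ^ 2 + Λ₁₁ * δ k ^ 2)
    (hqoε : ∀ ℓ m : ℕ, ∑ k ∈ Finset.Icc ℓ (ℓ + m), δ k ^ 2 ≤
      Λ₄ε * σ ℓ ^ 2 + ε * ∑ k ∈ Finset.Icc ℓ (ℓ + m), σ k ^ 2) :
    ∀ ℓ m : ℕ, ∑ k ∈ Finset.Icc ℓ (ℓ + m), δ k ^ 2 ≤
      (Λ₄ε + ε * (1 + Λ₁₁ * Λ₄ε) / (1 - ρ₁₂ - ε * Λ₁₁)) * σ ℓ ^ 2 :=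
  stmt_3_general ρ₁₂ Λ₁₁ Λ₄ε ε σ δ hΛ hε hε' hred hqoε
end

section
/- Let a, b, δ, â ≥ 0 and suppose: (i) for every λ > 0, â restricted parts satisfy â₁² ≤ (1+1/λ) a₁² + (1+λ)Λ₂² δ², (ii) â₂² ≤ (1+1/λ)ρ² a₂² + (1+λ)Λ₃² δ² with 0<ρ<1, (iii) δ² ≤ Λ₆(a²+μ²) + Λ₇ â², where â² = â₁² + â₂², a₁² + a₂² ≤ a², and M̂ := (Λ₂²+Λ₃²)Λ₇ < 1, M := (Λ₂²+Λ₃²)Λ₆. Then â ≤ Λ_qm^η · √(a²+μ²), where Λ_qm^η := (1 + M(1-M̂) + M̂ + 2√(M(1-M̂)+M̂))/(1-M̂)². -/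
/-!
Adding the reduction estimates for the two parts and inserting discrete reliability gives, with
`σ² = a² + μ²`, `M = (Λ₂² + Λ₃²) Λ₆`, `M̂ = (Λ₂² + Λ₃²) Λ₇`, for every `λ > 0`

  `â² ≤ (1 + 1/λ) σ² + (1 + λ) (M σ² + M̂ â²)`.

Optimising over `λ` (Young's inequality) turns this into `â ≤ σ + √(M σ² + M̂ â²)`, a quadratic
inequality in `â` whose larger root is `(1 + √(M (1 - M̂) + M̂)) σ / (1 - M̂)`. The constant of
the theorem is the square of the factor `(1 + √(M (1 - M̂) + M̂)) / (1 - M̂) ≥ 1`.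
-/

open Filter Topology

theorem le_add_sq_of_forall_le_one_add_inv_mul_add {x a b : ℝ} (ha : 0 ≤ a) (hb : 0 ≤ b)
    (h : ∀ lam : ℝ, 0 < lam → x ≤ (1 + 1 / lam) * a ^ 2 + (1 + lam) * b ^ 2) :
    x ≤ (a + b) ^ 2 := by
  -- `λ = a / b` is optimal; shifting both by `ε` avoids the cases `a = 0` and `b = 0`.
  have hbound : ∀ ε : ℝ, 0 < ε → x ≤ (a + b) ^ 2 + ε * (a + b) := by
    intro ε hε
    have ha' : a ^ 2 / (a + ε) ≤ a := by
      rw [div_le_iff₀ (by positivity)]; nlinarith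
    have hb' : b ^ 2 / (b + ε) ≤ b := by
      rw [div_le_iff₀ (by positivity)]; nlinarith
    calc x ≤ (1 + 1 / ((a + ε) / (b + ε))) * a ^ 2 + (1 + (a + ε) / (b + ε)) * b ^ 2 :=
          h _ (by positivity)
      _ = a ^ 2 + b ^ 2 + (b + ε) * (a ^ 2 / (a + ε)) + (a + ε) * (b ^ 2 / (b + ε)) := by
          field_simp
          ring
      _ ≤ a ^ 2 + b ^ 2 + (b + ε) * a + (a + ε) * b := by gcongr
      _ = (a + b) ^ 2 + ε * (a + b) := by ring
  have hlim : Tendsto (fun ε : ℝ => (a + b) ^ 2 + ε * (a + b)) (𝓝[>] 0) (𝓝 ((a + b) ^ 2)) := by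
    refine tendsto_nhdsWithin_of_tendsto_nhds ?_
    exact (by fun_prop : Continuous fun ε : ℝ => (a + b) ^ 2 + ε * (a + b)).tendsto' 0 _
      (by simp)
  exact ge_of_tendsto hlim (eventually_nhdsWithin_of_forall hbound)

theorem one_sub_mul_le_of_le_add_sqrt {u σ M Mh : ℝ} (hσ : 0 ≤ σ) (hM : 0 ≤ M) (hMh : 0 ≤ Mh)
    (hMh1 : Mh < 1) (h : u ≤ σ + √(M * σ ^ 2 + Mh * u ^ 2)) :
    (1 - Mh) * u ≤ (1 + √(M * (1 - Mh) + Mh)) * σ := by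
  set s := √(M * (1 - Mh) + Mh)
  have hs : s ^ 2 = M * (1 - Mh) + Mh := Real.sq_sqrt (by nlinarith)
  have hs0 : 0 ≤ s := Real.sqrt_nonneg _
  rcases lt_or_ge u σ with hu | hu
  · nlinarith
  have hquad : (u - σ) ^ 2 ≤ M * σ ^ 2 + Mh * u ^ 2 := by
    rw [← Real.sq_sqrt (show 0 ≤ M * σ ^ 2 + Mh * u ^ 2 by positivity)]
    exact pow_le_pow_left₀ (by linarith) (by linarith) 2
  -- `((1 - Mh) u - σ)² - s² σ² = (1 - Mh) ((u - σ)² - M σ² - Mh u²)`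
  have hsq : ((1 - Mh) * u - σ) ^ 2 ≤ (s * σ) ^ 2 := by
    nlinarith [mul_le_mul_of_nonneg_left hquad (sub_nonneg.2 hMh1.le)]
  linarith [abs_le_of_sq_le_sq' hsq (by positivity)]

theorem le_sq_div_sq_mul_of_one_sub_mul_le {u σ s m : ℝ} (hσ : 0 ≤ σ) (hs : 0 ≤ s)
    (hm : 0 ≤ m) (hm1 : m < 1) (h : (1 - m) * u ≤ (1 + s) * σ) :
    u ≤ (1 + s) ^ 2 / (1 - m) ^ 2 * σ := by
  rw [div_mul_eq_mul_div, le_div_iff₀ (by nlinarith)]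
  nlinarith [mul_le_mul_of_nonneg_left h (sub_nonneg.2 hm1.le),
    mul_nonneg (mul_nonneg (add_nonneg hs hm) (by linarith : 0 ≤ 1 + s)) hσ]

theorem stmt_4_general (Λ₂ Λ₃ Λ₆ Λ₇ ρ a a₁ a₂ ahat ahat₁ ahat₂ δ μ : ℝ)
    (hρ : 0 < ρ) (hρ' : ρ < 1)
    (hΛ₆ : 0 ≤ Λ₆) (hΛ₇ : 0 ≤ Λ₇)
    (hA1 : ∀ lam : ℝ, 0 < lam →
      ahat₁ ^ 2 ≤ (1 + 1 / lam) * a₁ ^ 2 + (1 + lam) * Λ₂ ^ 2 * δ ^ 2)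
    (hA2 : ∀ lam : ℝ, 0 < lam →
      ahat₂ ^ 2 ≤ (1 + 1 / lam) * ρ ^ 2 * a₂ ^ 2 + (1 + lam) * Λ₃ ^ 2 * δ ^ 2)
    (hA3 : δ ^ 2 ≤ Λ₆ * (a ^ 2 + μ ^ 2) + Λ₇ * ahat ^ 2)
    (hsplit : ahat ^ 2 = ahat₁ ^ 2 + ahat₂ ^ 2)
    (hsub : a₁ ^ 2 + a₂ ^ 2 ≤ a ^ 2)
    (hMhat : (Λ₂ ^ 2 + Λ₃ ^ 2) * Λ₇ < 1) :
    ahat ≤ (1 + ((Λ₂ ^ 2 + Λ₃ ^ 2) * Λ₆) * (1 - (Λ₂ ^ 2 + Λ₃ ^ 2) * Λ₇)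
          + (Λ₂ ^ 2 + Λ₃ ^ 2) * Λ₇
          + 2 * Real.sqrt (((Λ₂ ^ 2 + Λ₃ ^ 2) * Λ₆) * (1 - (Λ₂ ^ 2 + Λ₃ ^ 2) * Λ₇)
              + (Λ₂ ^ 2 + Λ₃ ^ 2) * Λ₇))
        / (1 - (Λ₂ ^ 2 + Λ₃ ^ 2) * Λ₇) ^ 2 * Real.sqrt (a ^ 2 + μ ^ 2) := by
  set E := Λ₂ ^ 2 + Λ₃ ^ 2
  set σ := √(a ^ 2 + μ ^ 2)
  have hσ : 0 ≤ σ := Real.sqrt_nonneg _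
  have hσsq : σ ^ 2 = a ^ 2 + μ ^ 2 := Real.sq_sqrt (by positivity)
  have hM : 0 ≤ E * Λ₆ := by positivity
  have hMh : 0 ≤ E * Λ₇ := by positivity
  have hcombined : ∀ lam : ℝ, 0 < lam → ahat ^ 2 ≤
      (1 + 1 / lam) * σ ^ 2 + (1 + lam) * √(E * Λ₆ * σ ^ 2 + E * Λ₇ * ahat ^ 2) ^ 2 := by
    intro lam hlam
    rw [hσsq, Real.sq_sqrt (by positivity)]
    have hρsq : ρ ^ 2 ≤ 1 := pow_le_one₀ hρ.le hρ'.le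
    have hinv : 0 ≤ 1 + 1 / lam := by positivity
    linarith [hA1 lam hlam, hA2 lam hlam, mul_le_mul_of_nonneg_left hA3
      (by positivity : 0 ≤ (1 + lam) * E),
      mul_nonneg (mul_nonneg hinv (sub_nonneg.2 hρsq)) (sq_nonneg a₂),
      mul_nonneg hinv (sub_nonneg.2 hsub), mul_nonneg hinv (sq_nonneg μ)]
  have hroot : ahat ≤ σ + √(E * Λ₆ * σ ^ 2 + E * Λ₇ * ahat ^ 2) :=
    (le_abs_self ahat).trans <| abs_le_of_sq_le_sq
      (le_add_sq_of_forall_le_one_add_inv_mul_add hσ (Real.sqrt_nonneg _) hcombined)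
      (by positivity)
  have hdisc : 0 ≤ E * Λ₆ * (1 - E * Λ₇) + E * Λ₇ := by nlinarith
  have hnum : 1 + E * Λ₆ * (1 - E * Λ₇) + E * Λ₇ + 2 * √(E * Λ₆ * (1 - E * Λ₇) + E * Λ₇) =
      (1 + √(E * Λ₆ * (1 - E * Λ₇) + E * Λ₇)) ^ 2 := by
    linear_combination -Real.sq_sqrt hdisc
  rw [hnum]
  exact le_sq_div_sq_mul_of_one_sub_mul_le hσ (Real.sqrt_nonneg _) hMh hMhat
    (one_sub_mul_le_of_le_add_sqrt hσ hM hMh hMhat hroot)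

theorem stmt_4 (Λ₂ Λ₃ Λ₆ Λ₇ ρ a a₁ a₂ ahat ahat₁ ahat₂ δ μ : ℝ)
    (hρ : 0 < ρ) (hρ' : ρ < 1)
    (ha : 0 ≤ a) (ha₁ : 0 ≤ a₁) (ha₂ : 0 ≤ a₂) (hahat : 0 ≤ ahat)
    (hahat₁ : 0 ≤ ahat₁) (hahat₂ : 0 ≤ ahat₂) (hδ : 0 ≤ δ) (hμ : 0 ≤ μ)
    (hΛ₂ : 0 ≤ Λ₂) (hΛ₃ : 0 ≤ Λ₃) (hΛ₆ : 0 ≤ Λ₆) (hΛ₇ : 0 ≤ Λ₇)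
    (hA1 : ∀ lam : ℝ, 0 < lam →
      ahat₁ ^ 2 ≤ (1 + 1 / lam) * a₁ ^ 2 + (1 + lam) * Λ₂ ^ 2 * δ ^ 2)
    (hA2 : ∀ lam : ℝ, 0 < lam →
      ahat₂ ^ 2 ≤ (1 + 1 / lam) * ρ ^ 2 * a₂ ^ 2 + (1 + lam) * Λ₃ ^ 2 * δ ^ 2)
    (hA3 : δ ^ 2 ≤ Λ₆ * (a ^ 2 + μ ^ 2) + Λ₇ * ahat ^ 2)
    (hsplit : ahat ^ 2 = ahat₁ ^ 2 + ahat₂ ^ 2)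
    (hsub : a₁ ^ 2 + a₂ ^ 2 ≤ a ^ 2)
    (hMhat : (Λ₂ ^ 2 + Λ₃ ^ 2) * Λ₇ < 1) :
    ahat ≤ (1 + ((Λ₂ ^ 2 + Λ₃ ^ 2) * Λ₆) * (1 - (Λ₂ ^ 2 + Λ₃ ^ 2) * Λ₇)
          + (Λ₂ ^ 2 + Λ₃ ^ 2) * Λ₇
          + 2 * Real.sqrt (((Λ₂ ^ 2 + Λ₃ ^ 2) * Λ₆) * (1 - (Λ₂ ^ 2 + Λ₃ ^ 2) * Λ₇)
              + (Λ₂ ^ 2 + Λ₃ ^ 2) * Λ₇))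
        / (1 - (Λ₂ ^ 2 + Λ₃ ^ 2) * Λ₇) ^ 2 * Real.sqrt (a ^ 2 + μ ^ 2) :=
  stmt_4_general Λ₂ Λ₃ Λ₆ Λ₇ ρ a a₁ a₂ ahat ahat₁ ahat₂ δ μ hρ hρ' hΛ₆ hΛ₇ hA1 hA2 hA3 hsplit hsub
    hMhat
end

section
/- Let η, η̂, μ, μ̂, δ ≥ 0 satisfy η̂² ≤ ρ_A η² + Λ₁₁ δ² with 0<ρ_A<1, μ̂² ≤ Λ₅ μ² with Λ₅ ≥ 1, and the Dörfler-case condition μ² ≤ κ η² with 0 < κ < κ₀ := (1−ρ_A)/(Λ₅−1) (κ₀ := ∞ if Λ₅=1). Then σ̂² := η̂² + μ̂² ≤ ((ρ_A + κΛ₅)/(1+κ)) σ² + Λ₁₁ δ², where σ² := η² + μ², and (ρ_A + κΛ₅)/(1+κ) < 1. -/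
/- After clearing the denominator `1 + κ`, the estimate is `(Λ - ρ) * (κ * a - b) ≥ 0`: the
data term `b`, weighted by `Λ ≥ ρ`, is absorbed by averaging it against `a` with weights `1 : κ`. -/
theorem mul_add_mul_le_div_mul_add {ρ Λ κ a b : ℝ} (hκ : 0 < 1 + κ) (hρΛ : ρ ≤ Λ)
    (hb : b ≤ κ * a) :
    ρ * a + Λ * b ≤ (ρ + κ * Λ) / (1 + κ) * (a + b) := by
  rw [div_mul_eq_mul_div, le_div_iff₀ hκ]
  nlinarith [mul_nonneg (sub_nonneg.2 hρΛ) (sub_nonneg.2 hb)]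

theorem div_one_add_lt_one_iff {ρ Λ κ : ℝ} (hκ : 0 < 1 + κ) :
    (ρ + κ * Λ) / (1 + κ) < 1 ↔ κ * (Λ - 1) < 1 - ρ := by
  rw [div_lt_one hκ]
  constructor <;> intro h <;> linarith

theorem stmt_6_general (η ηhat μ μhat δ ρA Λ₁₁ Λ₅ κ : ℝ)
    (hρA' : ρA < 1) (hΛ₅ : 1 ≤ Λ₅)
    (hκ : 0 < κ) (hκ₀ : κ * (Λ₅ - 1) < 1 - ρA)
    (hred : ηhat ^ 2 ≤ ρA * η ^ 2 + Λ₁₁ * δ ^ 2)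
    (hdata : μhat ^ 2 ≤ Λ₅ * μ ^ 2)
    (hcaseA : μ ^ 2 ≤ κ * η ^ 2) :
    ηhat ^ 2 + μhat ^ 2 ≤ (ρA + κ * Λ₅) / (1 + κ) * (η ^ 2 + μ ^ 2) + Λ₁₁ * δ ^ 2 ∧
      (ρA + κ * Λ₅) / (1 + κ) < 1 := by
  have hκ1 : 0 < 1 + κ := by linarith
  have habsorb := mul_add_mul_le_div_mul_add hκ1 (by linarith : ρA ≤ Λ₅) hcaseA
  exact ⟨by linarith, (div_one_add_lt_one_iff hκ1).2 hκ₀⟩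

theorem stmt_6 (η ηhat μ μhat δ ρA Λ₁₁ Λ₅ κ : ℝ)
    (hη : 0 ≤ η) (hηhat : 0 ≤ ηhat) (hμ : 0 ≤ μ) (hμhat : 0 ≤ μhat) (hδ : 0 ≤ δ)
    (hρA : 0 < ρA) (hρA' : ρA < 1) (hΛ₁₁ : 0 < Λ₁₁) (hΛ₅ : 1 ≤ Λ₅)
    (hκ : 0 < κ) (hκ₀ : κ * (Λ₅ - 1) < 1 - ρA)
    (hred : ηhat ^ 2 ≤ ρA * η ^ 2 + Λ₁₁ * δ ^ 2)
    (hdata : μhat ^ 2 ≤ Λ₅ * μ ^ 2)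
    (hcaseA : μ ^ 2 ≤ κ * η ^ 2) :
    ηhat ^ 2 + μhat ^ 2 ≤ (ρA + κ * Λ₅) / (1 + κ) * (η ^ 2 + μ ^ 2) + Λ₁₁ * δ ^ 2 ∧
      (ρA + κ * Λ₅) / (1 + κ) < 1 :=
  stmt_6_general η ηhat μ μhat δ ρA Λ₁₁ Λ₅ κ hρA' hΛ₅ hκ hκ₀ hred hdata hcaseA
end

section
/- Let η, η̂, μ, μ̂, δ ≥ 0 satisfy η̂² ≤ (1+λ) η² + Λ₁₁ δ² with λ > 0, μ̂² ≤ ρ_B μ² with 0<ρ_B<1, and the data-dominated condition κ η² < μ² with κ > 0 and λ < κ(1−ρ_B). Then σ̂² := η̂² + μ̂² < ((1+λ+κρ_B)/(1+κ)) σ² + Λ₁₁ δ², where σ² := η² + μ², and (1+λ+κρ_B)/(1+κ) < 1. -/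
/-! With `c = (1 + λ + κ ρ_B) / (1 + κ)`, the gap between `c σ²` and `(1 + λ) η² + ρ_B μ²` factors as
`(1 + λ - ρ_B) / (1 + κ) * (μ² - κ η²)`, which is positive exactly in the data-dominated case
`κ η² < μ²`; and `c < 1` is a rearrangement of `λ < κ (1 - ρ_B)`. -/

lemma contraction_factor_mul_sub_eq {lam ρ κ : ℝ} (hκ : 1 + κ ≠ 0) (a b : ℝ) :
    (1 + lam + κ * ρ) / (1 + κ) * (a + b) - ((1 + lam) * a + ρ * b) =
      (1 + lam - ρ) / (1 + κ) * (b - κ * a) := by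
  field_simp
  ring

lemma add_mul_lt_contraction_factor_mul {lam ρ κ a b : ℝ} (hκ : 0 < κ) (hρ : ρ < 1 + lam)
    (hab : κ * a < b) :
    (1 + lam) * a + ρ * b < (1 + lam + κ * ρ) / (1 + κ) * (a + b) := by
  have hgap : 0 < (1 + lam - ρ) / (1 + κ) * (b - κ * a) := by
    apply mul_pos (div_pos _ _) <;> linarith
  linarith [contraction_factor_mul_sub_eq (lam := lam) (ρ := ρ) (by positivity : 1 + κ ≠ 0) a b]

lemma contraction_factor_lt_one {lam ρ κ : ℝ} (hκ : 0 < κ) (hlamκ : lam < κ * (1 - ρ)) :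
    (1 + lam + κ * ρ) / (1 + κ) < 1 := by
  rw [div_lt_one (by linarith)]
  linarith

theorem stmt_7_general (η ηhat μ μhat δ lam Λ₁₁ ρB κ : ℝ)
    (hlam : 0 < lam) (hρB' : ρB < 1)
    (hκ : 0 < κ) (hlamκ : lam < κ * (1 - ρB))
    (hred : ηhat ^ 2 ≤ (1 + lam) * η ^ 2 + Λ₁₁ * δ ^ 2)
    (hdata : μhat ^ 2 ≤ ρB * μ ^ 2)
    (hcaseB : κ * η ^ 2 < μ ^ 2) :
    ηhat ^ 2 + μhat ^ 2 < (1 + lam + κ * ρB) / (1 + κ) * (η ^ 2 + μ ^ 2) + Λ₁₁ * δ ^ 2 ∧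
      (1 + lam + κ * ρB) / (1 + κ) < 1 := by
  have hgain := add_mul_lt_contraction_factor_mul hκ (by linarith : ρB < 1 + lam) hcaseB
  exact ⟨by linarith, contraction_factor_lt_one hκ hlamκ⟩

theorem stmt_7 (η ηhat μ μhat δ lam Λ₁₁ ρB κ : ℝ)
    (hη : 0 ≤ η) (hηhat : 0 ≤ ηhat) (hμ : 0 ≤ μ) (hμhat : 0 ≤ μhat) (hδ : 0 ≤ δ)
    (hlam : 0 < lam) (hΛ₁₁ : 0 < Λ₁₁) (hρB : 0 < ρB) (hρB' : ρB < 1)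
    (hκ : 0 < κ) (hlamκ : lam < κ * (1 - ρB))
    (hred : ηhat ^ 2 ≤ (1 + lam) * η ^ 2 + Λ₁₁ * δ ^ 2)
    (hdata : μhat ^ 2 ≤ ρB * μ ^ 2)
    (hcaseB : κ * η ^ 2 < μ ^ 2) :
    ηhat ^ 2 + μhat ^ 2 < (1 + lam + κ * ρB) / (1 + κ) * (η ^ 2 + μ ^ 2) + Λ₁₁ * δ ^ 2 ∧
      (1 + lam + κ * ρB) / (1 + κ) < 1 :=
  stmt_7_general η ηhat μ μhat δ lam Λ₁₁ ρB κ hlam hρB' hκ hlamκ hred hdata hcaseB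
end

section
/- Suppose real numbers η_ℓ, μ_ℓ, σ_ℓ ≥ 0 with σ_ℓ² = η_ℓ² + μ_ℓ², a refinement with σ(T̂_ℓ) ≤ ξσ_ℓ, and the stability/discrete-reliability consequence η²_ℓ(T_ℓ∩T̂_ℓ) ≤ (1+ν+(1+1/ν)Λ₂²Λ₇)η²(T̂_ℓ) + (1+1/ν)Λ₂²Λ₆(η²_ℓ(R) + μ²_ℓ) for any ν>0, where R ⊇ T_ℓ\T̂_ℓ. Then (1 − ξ²(1+ν+(1+1/ν)Λ₂²Λ₇)) η_ℓ² ≤ (1+(1+1/ν)Λ₂²Λ₆) η²_ℓ(R) + ((1+ν)ξ² + (1+1/ν)Λ₂²(Λ₆+Λ₇ξ²)) μ²_ℓ. -/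
theorem stmt_12_general (ηℓ μℓ σℓ ηcap ηdiff ηR ηhat ξ ν Λ₂ Λ₆ Λ₇ : ℝ)
    (hν : 0 < ν)
    (hΛ₇ : 0 ≤ Λ₇)
    (hσ : σℓ ^ 2 = ηℓ ^ 2 + μℓ ^ 2)
    (hsplit : ηℓ ^ 2 = ηcap ^ 2 + ηdiff ^ 2)
    (hR : ηdiff ^ 2 ≤ ηR ^ 2)
    (hηhatσ : ηhat ^ 2 ≤ ξ ^ 2 * σℓ ^ 2)
    (hstab : ηcap ^ 2 ≤ (1 + ν + (1 + 1 / ν) * Λ₂ ^ 2 * Λ₇) * ηhat ^ 2 +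
      (1 + 1 / ν) * Λ₂ ^ 2 * Λ₆ * (ηR ^ 2 + μℓ ^ 2)) :
    (1 - ξ ^ 2 * (1 + ν + (1 + 1 / ν) * Λ₂ ^ 2 * Λ₇)) * ηℓ ^ 2 ≤
      (1 + (1 + 1 / ν) * Λ₂ ^ 2 * Λ₆) * ηR ^ 2 +
      ((1 + ν) * ξ ^ 2 + (1 + 1 / ν) * Λ₂ ^ 2 * (Λ₆ + Λ₇ * ξ ^ 2)) * μℓ ^ 2 := by
  set C := 1 + ν + (1 + 1 / ν) * Λ₂ ^ 2 * Λ₇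
  set K := (1 + 1 / ν) * Λ₂ ^ 2 * Λ₆
  have hC : 0 ≤ C := by positivity
  have hηhat : C * ηhat ^ 2 ≤ C * ξ ^ 2 * (ηℓ ^ 2 + μℓ ^ 2) := by
    rw [← hσ, mul_assoc]
    exact mul_le_mul_of_nonneg_left hηhatσ hC
  have hcoeff : (1 + ν) * ξ ^ 2 + (1 + 1 / ν) * Λ₂ ^ 2 * (Λ₆ + Λ₇ * ξ ^ 2) = C * ξ ^ 2 + K := by
    ring
  -- `ηℓ² = ηcap² + ηdiff²`, bound both parts, and absorb the `ξ² C ηℓ²` term on the left.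
  rw [hcoeff]
  linarith

theorem stmt_12 (ηℓ μℓ σℓ ηcap ηdiff ηR ηhat ξ ν Λ₂ Λ₆ Λ₇ : ℝ)
    (hηℓ : 0 ≤ ηℓ) (hμℓ : 0 ≤ μℓ) (hσℓ : 0 ≤ σℓ)
    (hηcap : 0 ≤ ηcap) (hηdiff : 0 ≤ ηdiff) (hηR : 0 ≤ ηR) (hηhat : 0 ≤ ηhat)
    (hξ : 0 < ξ) (hξ' : ξ < 1) (hν : 0 < ν)
    (hΛ₂ : 0 ≤ Λ₂) (hΛ₆ : 0 ≤ Λ₆) (hΛ₇ : 0 ≤ Λ₇)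
    (hσ : σℓ ^ 2 = ηℓ ^ 2 + μℓ ^ 2)
    (hsplit : ηℓ ^ 2 = ηcap ^ 2 + ηdiff ^ 2)
    (hR : ηdiff ^ 2 ≤ ηR ^ 2)
    (hηhatσ : ηhat ^ 2 ≤ ξ ^ 2 * σℓ ^ 2)
    (hstab : ηcap ^ 2 ≤ (1 + ν + (1 + 1 / ν) * Λ₂ ^ 2 * Λ₇) * ηhat ^ 2 +
      (1 + 1 / ν) * Λ₂ ^ 2 * Λ₆ * (ηR ^ 2 + μℓ ^ 2)) :
    (1 - ξ ^ 2 * (1 + ν + (1 + 1 / ν) * Λ₂ ^ 2 * Λ₇)) * ηℓ ^ 2 ≤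
      (1 + (1 + 1 / ν) * Λ₂ ^ 2 * Λ₆) * ηR ^ 2 +
      ((1 + ν) * ξ ^ 2 + (1 + 1 / ν) * Λ₂ ^ 2 * (Λ₆ + Λ₇ * ξ ^ 2)) * μℓ ^ 2 :=
  stmt_12_general ηℓ μℓ σℓ ηcap ηdiff ηR ηhat ξ ν Λ₂ Λ₆ Λ₇ hν hΛ₇ hσ hsplit hR hηhatσ hstab
end

section
/- In Case (A) with μ_ℓ² ≤ κη_ℓ² and the bound of the comparison lemma, the set R := R(T_ℓ, T̂_ℓ) satisfies the Dörfler property θ_A η_ℓ² ≤ η²_ℓ(R) whenever θ_A < f(ξ,ν) with f as in the optimality proof: (1 − (1+κ)ξ²(1+ν) − (1+κ)ξ²(1+1/ν)Λ₂²Λ₇ − κ(1+1/ν)Λ₂²Λ₆) η_ℓ² ≤ (1 + (1+1/ν)Λ₂²Λ₆) η²_ℓ(R). -/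
lemma mul_le_of_lt_div_of_mul_le {α : Type*} [Field α] [LinearOrder α] [IsStrictOrderedRing α]
    {θ a D x y : α} (hD : 0 < D) (hx : 0 ≤ x) (hθ : θ < a / D) (h : a * x ≤ D * y) :
    θ * x ≤ y := by
  have hθD : θ * D ≤ a := ((lt_div_iff₀ hD).1 hθ).le
  refine le_of_mul_le_mul_left ?_ hD
  calc D * (θ * x) = θ * D * x := by ring
    _ ≤ a * x := mul_le_mul_of_nonneg_right hθD hx
    _ ≤ D * y := h

theorem stmt_14_general (κ ξ ν Λ₂ Λ₆ Λ₇ θA ηℓ ηR : ℝ)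
    (hν : 0 < ν)
    (hΛ₆ : 0 ≤ Λ₆)
    (hbound : (1 - (1 + κ) * ξ ^ 2 * (1 + ν) - (1 + κ) * ξ ^ 2 * (1 + 1 / ν) * Λ₂ ^ 2 * Λ₇
        - κ * (1 + 1 / ν) * Λ₂ ^ 2 * Λ₆) * ηℓ ^ 2 ≤
      (1 + (1 + 1 / ν) * Λ₂ ^ 2 * Λ₆) * ηR ^ 2)
    (hθA : θA < (1 - ξ ^ 2 * ((1 + κ) * (1 + ν) + (1 + κ) * (1 + 1 / ν) * Λ₂ ^ 2 * Λ₇)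
        - κ * (1 + 1 / ν) * Λ₂ ^ 2 * Λ₆) / (1 + (1 + 1 / ν) * Λ₂ ^ 2 * Λ₆)) :
    θA * ηℓ ^ 2 ≤ ηR ^ 2 := by
  refine mul_le_of_lt_div_of_mul_le (by positivity) (sq_nonneg ηℓ) hθA ?_
  -- the numerator in `hθA` is the coefficient in `hbound` with `ξ ^ 2` factored out
  linarith

theorem stmt_14 (κ ξ ν Λ₂ Λ₆ Λ₇ θA ηℓ μℓ ηR : ℝ)
    (hκ : 0 < κ) (hξ : 0 < ξ) (hξ' : ξ < 1) (hν : 0 < ν)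
    (hΛ₂ : 0 ≤ Λ₂) (hΛ₆ : 0 ≤ Λ₆) (hΛ₇ : 0 ≤ Λ₇)
    (hηℓ : 0 ≤ ηℓ) (hμℓ : 0 ≤ μℓ) (hηR : 0 ≤ ηR)
    (hcaseA : μℓ ^ 2 ≤ κ * ηℓ ^ 2)
    (hbound : (1 - (1 + κ) * ξ ^ 2 * (1 + ν) - (1 + κ) * ξ ^ 2 * (1 + 1 / ν) * Λ₂ ^ 2 * Λ₇
        - κ * (1 + 1 / ν) * Λ₂ ^ 2 * Λ₆) * ηℓ ^ 2 ≤
      (1 + (1 + 1 / ν) * Λ₂ ^ 2 * Λ₆) * ηR ^ 2)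
    (hθA : θA < (1 - ξ ^ 2 * ((1 + κ) * (1 + ν) + (1 + κ) * (1 + 1 / ν) * Λ₂ ^ 2 * Λ₇)
        - κ * (1 + 1 / ν) * Λ₂ ^ 2 * Λ₆) / (1 + (1 + 1 / ν) * Λ₂ ^ 2 * Λ₆)) :
    θA * ηℓ ^ 2 ≤ ηR ^ 2 :=
  stmt_14_general κ ξ ν Λ₂ Λ₆ Λ₇ θA ηℓ ηR hν hΛ₆ hbound hθA
end
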